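/- For every ℓ ≥ 1 and every n ≥ 0, the sequences defined by the mex recursion satisfy a_{n+1} - a_n ∈ {1, 2} and b_{n+1} - b_n ∈ {2, 3}; in particular b_{n+1} - b_n = (a_{n+1} - a_n) + 1. -/

import Mathlib

/-- The minimum excluded value of a set of natural numbers. -/
noncomputable def mex (S : Set ℕ) : ℕ := sInf {m : ℕ | m ∉ S}

/-- `MexSeq ℓ a b` says that `a`, `b` are the sequences defined by
    `a 0 = ℓ+1`, `b 0 = 2ℓ+2`, and for `n ≥ 1`:
    `a n = mex({a i, b i : i < n} ∪ {0,…,ℓ})`, `b n = a n + n + ℓ + 1`. -/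
def MexSeq (ℓ : ℕ) (a b : ℕ → ℕ) : Prop :=
  a 0 = ℓ + 1 ∧ b 0 = 2 * ℓ + 2 ∧
  (∀ n : ℕ, 1 ≤ n →
    a n = mex ({m : ℕ | ∃ i < n, m = a i ∨ m = b i} ∪ {m : ℕ | m ≤ ℓ})) ∧
  (∀ n : ℕ, 1 ≤ n → b n = a n + n + ℓ + 1)

/-!
Write `S n = {a i, b i : i < n} ∪ {0, …, ℓ}`; then `a n = mex (S n)` for every `n`, including
`n = 0`. Since `S n ⊆ S (n + 1)` and `a n ∈ S (n + 1)`, the sequence `a` is strictly increasing,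
and hence so is `b n = a n + n + ℓ + 1`, with gaps of at least `2`. Every element of `S (n + 1)`
above `a n` is some `b i`, so `a n + 1` and `a n + 2` cannot both lie in `S (n + 1)`, which forces
`a (n + 1) ∈ {a n + 1, a n + 2}`.
-/

open Set

section Mex

variable {S T : Set ℕ} {k : ℕ}

lemma mex_le_of_notMem (hk : k ∉ S) : mex S ≤ k :=
  Nat.sInf_le hk

lemma mem_of_lt_mex (hk : k < mex S) : k ∈ S := by
  by_contra h
  exact (mex_le_of_notMem h).not_gt hk

lemma mex_notMem (hS : S.Finite) : mex S ∉ S :=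
  Nat.sInf_mem hS.infinite_compl.nonempty

lemma mex_mono (hST : S ⊆ T) (hT : T.Finite) : mex S ≤ mex T := by
  by_contra h
  exact mex_notMem hT (hST (mem_of_lt_mex (not_le.1 h)))

lemma mex_lt_mex (hST : S ⊆ T) (hmex : mex S ∈ T) (hT : T.Finite) : mex S < mex T :=
  (mex_mono hST hT).lt_of_ne fun h ↦ mex_notMem hT (h ▸ hmex)

lemma mex_Iic (ℓ : ℕ) : mex (Iic ℓ) = ℓ + 1 :=
  le_antisymm (mex_le_of_notMem (by simp)) <|
    not_lt.1 fun h ↦ mex_notMem (finite_Iic ℓ) (Nat.lt_succ_iff.1 h)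

end Mex

def mexSet (ℓ : ℕ) (a b : ℕ → ℕ) (n : ℕ) : Set ℕ :=
  {m : ℕ | ∃ i < n, m = a i ∨ m = b i} ∪ {m : ℕ | m ≤ ℓ}

section MexSet

variable {ℓ : ℕ} {a b : ℕ → ℕ}

lemma mexSet_zero : mexSet ℓ a b 0 = Iic ℓ := by
  ext m
  simp [mexSet]

lemma mexSet_finite (n : ℕ) : (mexSet ℓ a b n).Finite := by
  refine Finite.union ?_ (finite_Iic ℓ)
  refine (((finite_lt_nat n).image a).union ((finite_lt_nat n).image b)).subset ?_
  rintro m ⟨i, hi, rfl | rfl⟩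
  exacts [Or.inl ⟨i, hi, rfl⟩, Or.inr ⟨i, hi, rfl⟩]

lemma mexSet_mono : Monotone (mexSet ℓ a b) := by
  intro n n' hn m hm
  rcases hm with ⟨i, hi, hm⟩ | hm
  · exact Or.inl ⟨i, hi.trans_le hn, hm⟩
  · exact Or.inr hm

lemma a_mem_mexSet_succ (n : ℕ) : a n ∈ mexSet ℓ a b (n + 1) :=
  Or.inl ⟨n, n.lt_succ_self, Or.inl rfl⟩

end MexSet

namespace MexSeq

variable {ℓ : ℕ} {a b : ℕ → ℕ} (hab : MexSeq ℓ a b)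
include hab

lemma a_eq_mex (n : ℕ) : a n = mex (mexSet ℓ a b n) := by
  rcases Nat.eq_zero_or_pos n with rfl | hn
  · rw [mexSet_zero, mex_Iic, hab.1]
  · exact hab.2.2.1 n hn

lemma b_eq (n : ℕ) : b n = a n + n + ℓ + 1 := by
  rcases Nat.eq_zero_or_pos n with rfl | hn
  · rw [hab.1, hab.2.1]; ring
  · exact hab.2.2.2 n hn

lemma strictMono_a : StrictMono a := by
  refine strictMono_nat_of_lt_succ fun n ↦ ?_
  rw [hab.a_eq_mex n, hab.a_eq_mex (n + 1)]
  exact mex_lt_mex (mexSet_mono n.le_succ) (hab.a_eq_mex n ▸ a_mem_mexSet_succ n)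
    (mexSet_finite _)

lemma b_add_two_le {i j : ℕ} (hij : i < j) : b i + 2 ≤ b j := by
  have := hab.strictMono_a hij
  rw [hab.b_eq i, hab.b_eq j]
  omega

lemma exists_b_eq_of_lt {n m : ℕ} (hm : a n < m) (hmS : m ∈ mexSet ℓ a b (n + 1)) :
    ∃ i ≤ n, m = b i := by
  rcases hmS with ⟨i, hi, rfl | rfl⟩ | hmℓ
  · exact absurd hm (hab.strictMono_a.monotone (Nat.lt_succ_iff.1 hi)).not_gt
  · exact ⟨i, Nat.lt_succ_iff.1 hi, rfl⟩
  · have : a 0 ≤ a n := hab.strictMono_a.monotone n.zero_le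
    have : m ≤ ℓ := hmℓ
    have := hab.1
    omega

lemma notMem_mexSet_succ (n : ℕ) :
    a n + 1 ∉ mexSet ℓ a b (n + 1) ∨ a n + 2 ∉ mexSet ℓ a b (n + 1) := by
  by_contra! h
  obtain ⟨i, -, hi⟩ := hab.exists_b_eq_of_lt (by omega) h.1
  obtain ⟨j, -, hj⟩ := hab.exists_b_eq_of_lt (by omega) h.2
  rcases lt_trichotomy i j with hij | rfl | hji
  · have := hab.b_add_two_le hij; omega
  · omega
  · have := hab.b_add_two_le hji; omega

lemma a_succ_eq (n : ℕ) : a (n + 1) = a n + 1 ∨ a (n + 1) = a n + 2 := by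
  have hlt : a n < a (n + 1) := hab.strictMono_a n.lt_succ_self
  have hle : a (n + 1) ≤ a n + 2 := by
    rw [hab.a_eq_mex (n + 1)]
    rcases hab.notMem_mexSet_succ n with h | h
    · exact (mex_le_of_notMem h).trans (Nat.le_succ _)
    · exact mex_le_of_notMem h
  omega

end MexSeq

theorem mexSeq_gaps_general (ℓ : ℕ) (a b : ℕ → ℕ)
    (hab : MexSeq ℓ a b) :
    ∀ n : ℕ,
      (a (n + 1) - a n = 1 ∨ a (n + 1) - a n = 2) ∧
      (b (n + 1) - b n = 2 ∨ b (n + 1) - b n = 3) ∧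
      b (n + 1) - b n = (a (n + 1) - a n) + 1 := by
  intro n
  have ha := hab.a_succ_eq n
  have hb := hab.b_eq n
  have hb' := hab.b_eq (n + 1)
  omega

theorem mexSeq_gaps (ℓ : ℕ) (hℓ : 1 ≤ ℓ) (a b : ℕ → ℕ)
    (hab : MexSeq ℓ a b) :
    ∀ n : ℕ,
      (a (n + 1) - a n = 1 ∨ a (n + 1) - a n = 2) ∧
      (b (n + 1) - b n = 2 ∨ b (n + 1) - b n = 3) ∧
      b (n + 1) - b n = (a (n + 1) - a n) + 1 :=
  mexSeq_gaps_general ℓ a b hab
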